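/- For N ≥ 3 and σ ∈ (0,2), the function w(x) = ((N-σ)(N-2))^{(N-2)/(2(2-σ))} (1 + |x|^{2-σ})^{(2-N)/(2-σ)} is a positive smooth solution on ℝ^N \ {0} of -Δw = |x|^{-σ} w^{2*(σ)-1}, where 2*(σ) = 2(N-σ)/(N-2). -/

import Mathlib

open MeasureTheory

/-- Euclidean Laplacian, written as the sum of second derivatives in the
coordinate directions. -/
noncomputable def eLaplacian (N : ℕ) (u : EuclideanSpace ℝ (Fin N) → ℝ)
    (x : EuclideanSpace ℝ (Fin N)) : ℝ :=
  ∑ i : Fin N,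
    fderiv ℝ (fun y => fderiv ℝ u y (EuclideanSpace.single i (1 : ℝ))) x
      (EuclideanSpace.single i (1 : ℝ))

/-- For `N ≥ 3`, `σ ∈ (0,2)`, the function
`w(x) = ((N-σ)(N-2))^{(N-2)/(2(2-σ))} (1+|x|^{2-σ})^{(2-N)/(2-σ)}`
is a positive smooth solution on `ℝ^N \ {0}` of
`-Δw = |x|^{-σ} w^{2*(σ)-1}`, where `2*(σ) = 2(N-σ)/(N-2)`. -/
theorem stmt_2 (N : ℕ) (hN : 3 ≤ N) (σ : ℝ) (hσ : σ ∈ Set.Ioo (0 : ℝ) 2)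
    (w : EuclideanSpace ℝ (Fin N) → ℝ)
    (hw : ∀ x, w x = (((N : ℝ) - σ) * ((N : ℝ) - 2)) ^ (((N : ℝ) - 2) / (2 * (2 - σ))) *
      (1 + ‖x‖ ^ (2 - σ)) ^ ((2 - (N : ℝ)) / (2 - σ))) :
    (∀ x : EuclideanSpace ℝ (Fin N), 0 < w x) ∧
    ContDiffOn ℝ (⊤ : ℕ∞) w {(0 : EuclideanSpace ℝ (Fin N))}ᶜ ∧
    (∀ x : EuclideanSpace ℝ (Fin N), x ≠ 0 →
      -eLaplacian N w x =
        ‖x‖ ^ (-σ) * w x ^ (2 * ((N : ℝ) - σ) / ((N : ℝ) - 2) - 1)) := by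
  obtain ⟨hσ0, hσ2⟩ := hσ
  have hN3 : (3 : ℝ) ≤ (N : ℝ) := by exact_mod_cast hN
  have h2σ : (0 : ℝ) < 2 - σ := by linarith
  have hN2 : (0 : ℝ) < (N : ℝ) - 2 := by linarith
  have hNσ : (0 : ℝ) < (N : ℝ) - σ := by linarith
  set A : ℝ := ((N : ℝ) - σ) * ((N : ℝ) - 2) with hA_def
  have hA : 0 < A := mul_pos hNσ hN2
  set C : ℝ := A ^ (((N : ℝ) - 2) / (2 * (2 - σ))) with hC_def
  have hC : 0 < C := Real.rpow_pos_of_pos hA _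
  set p : ℝ := (2 - σ) / 2 with hp_def
  set q : ℝ := (2 - (N : ℝ)) / (2 - σ) with hq_def
  -- express `w` through the square of the norm
  have hnorm2 : ∀ y : EuclideanSpace ℝ (Fin N),
      ((‖y‖ : ℝ) ^ 2) ^ p = ‖y‖ ^ (2 - σ) := by
    intro y
    rw [← Real.rpow_natCast ‖y‖ 2, ← Real.rpow_mul (norm_nonneg y)]
    congr 1
    push_cast
    rw [hp_def]; ring
  have hwW : w = fun y : EuclideanSpace ℝ (Fin N) =>
      C * (1 + ((‖y‖ : ℝ) ^ 2) ^ p) ^ q := by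
    funext y
    rw [hw y, ← hnorm2 y]
  subst hwW
  refine ⟨?_, ?_, ?_⟩
  · -- positivity
    intro x
    have hB : 0 < 1 + ((‖x‖ : ℝ) ^ 2) ^ p := by positivity
    exact mul_pos hC (Real.rpow_pos_of_pos hB q)
  · -- smoothness
    intro x hx
    have hx0 : x ≠ 0 := hx
    have hnx : ((‖x‖ : ℝ) ^ 2) ≠ 0 := pow_ne_zero 2 (norm_ne_zero_iff.mpr hx0)
    have h1 : ContDiffAt ℝ (⊤ : ℕ∞) (fun y : EuclideanSpace ℝ (Fin N) => (‖y‖ : ℝ) ^ 2) x :=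
      (contDiff_norm_sq ℝ).contDiffAt
    have h2 : ContDiffAt ℝ (⊤ : ℕ∞) (fun y : EuclideanSpace ℝ (Fin N) => ((‖y‖ : ℝ) ^ 2) ^ p) x :=
      h1.rpow_const_of_ne hnx
    have h3 : ContDiffAt ℝ (⊤ : ℕ∞)
        (fun y : EuclideanSpace ℝ (Fin N) => 1 + ((‖y‖ : ℝ) ^ 2) ^ p) x :=
      contDiffAt_const.add h2
    have hB : (0 : ℝ) < 1 + ((‖x‖ : ℝ) ^ 2) ^ p := by positivity
    have h4 : ContDiffAt ℝ (⊤ : ℕ∞)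
        (fun y : EuclideanSpace ℝ (Fin N) => (1 + ((‖y‖ : ℝ) ^ 2) ^ p) ^ q) x :=
      h3.rpow_const_of_ne hB.ne'
    exact (contDiffAt_const.mul h4).contDiffWithinAt
  · -- the equation
    intro x hx
    have hr : (0 : ℝ) < ‖x‖ := norm_pos_iff.mpr hx
    -- one-dimensional derivative computations
    set g1 : ℝ → ℝ := fun t => C * q * p * ((1 + t ^ p) ^ (q - 1) * t ^ (p - 1)) with hg1_def
    have hgd : ∀ t : ℝ, 0 < t →
        HasDerivAt (fun u : ℝ => C * (1 + u ^ p) ^ q) (g1 t) t := by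
      intro t ht
      have hBt : (0 : ℝ) < 1 + t ^ p := by positivity
      have h1 : HasDerivAt (fun u : ℝ => u ^ p) (p * t ^ (p - 1)) t :=
        Real.hasDerivAt_rpow_const (Or.inl ht.ne')
      have h2 : HasDerivAt (fun u : ℝ => 1 + u ^ p) (p * t ^ (p - 1)) t := h1.const_add 1
      have h3 : HasDerivAt (fun u : ℝ => (1 + u ^ p) ^ q)
          (p * t ^ (p - 1) * q * (1 + t ^ p) ^ (q - 1)) t :=
        h2.rpow_const (Or.inl hBt.ne')
      have h4 := h3.const_mul C
      refine h4.congr_deriv ?_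
      rw [hg1_def]; ring
    have hg1d : ∀ t : ℝ, 0 < t →
        HasDerivAt g1 (C * q * p * ((q - 1) * (1 + t ^ p) ^ (q - 2) * (p * t ^ (p - 1)) * t ^ (p - 1)
          + (1 + t ^ p) ^ (q - 1) * ((p - 1) * t ^ (p - 2)))) t := by
      intro t ht
      have hBt : (0 : ℝ) < 1 + t ^ p := by positivity
      have h1 : HasDerivAt (fun u : ℝ => u ^ p) (p * t ^ (p - 1)) t :=
        Real.hasDerivAt_rpow_const (Or.inl ht.ne')
      have h2 : HasDerivAt (fun u : ℝ => 1 + u ^ p) (p * t ^ (p - 1)) t := h1.const_add 1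
      have h3 : HasDerivAt (fun u : ℝ => (1 + u ^ p) ^ (q - 1))
          (p * t ^ (p - 1) * (q - 1) * (1 + t ^ p) ^ (q - 1 - 1)) t :=
        h2.rpow_const (Or.inl hBt.ne')
      have h4 : HasDerivAt (fun u : ℝ => u ^ (p - 1)) ((p - 1) * t ^ (p - 1 - 1)) t :=
        Real.hasDerivAt_rpow_const (Or.inl ht.ne')
      have h5 := (h3.mul h4).const_mul (C * q * p)
      rw [show q - 1 - 1 = q - 2 by ring, show p - 1 - 1 = p - 2 by ring] at h5
      exact h5.congr_deriv (by ring)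
    -- first spatial derivative
    have hfd1 : ∀ y : EuclideanSpace ℝ (Fin N), y ≠ 0 → ∀ i : Fin N,
        fderiv ℝ (fun z : EuclideanSpace ℝ (Fin N) => C * (1 + ((‖z‖ : ℝ) ^ 2) ^ p) ^ q) y
          (EuclideanSpace.single i (1 : ℝ)) = g1 ((‖y‖ : ℝ) ^ 2) * (2 * y i) := by
      intro y hy i
      have hty : (0 : ℝ) < (‖y‖ : ℝ) ^ 2 := pow_pos (norm_pos_iff.mpr hy) 2
      have hD := (hgd ((‖y‖ : ℝ) ^ 2) hty).comp_hasFDerivAt y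
        (hasStrictFDerivAt_norm_sq y).hasFDerivAt
      have hD' := hD.fderiv
      simp only [Function.comp_def] at hD'
      rw [hD']
      simp [EuclideanSpace.inner_single_right]
    -- the per-coordinate second derivative
    have htx : (0 : ℝ) < (‖x‖ : ℝ) ^ 2 := pow_pos hr 2
    set G2 : ℝ := C * q * p * ((q - 1) * (1 + ((‖x‖ : ℝ) ^ 2) ^ p) ^ (q - 2) *
        (p * ((‖x‖ : ℝ) ^ 2) ^ (p - 1)) * ((‖x‖ : ℝ) ^ 2) ^ (p - 1)
        + (1 + ((‖x‖ : ℝ) ^ 2) ^ p) ^ (q - 1) * ((p - 1) * ((‖x‖ : ℝ) ^ 2) ^ (p - 2))) with hG2_def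
    have hterm : ∀ i : Fin N,
        fderiv ℝ (fun y => fderiv ℝ
          (fun z : EuclideanSpace ℝ (Fin N) => C * (1 + ((‖z‖ : ℝ) ^ 2) ^ p) ^ q) y
          (EuclideanSpace.single i (1 : ℝ))) x (EuclideanSpace.single i (1 : ℝ))
          = 2 * g1 ((‖x‖ : ℝ) ^ 2) + G2 * (2 * x i) * (2 * x i) := by
      intro i
      have hxmem : {(0 : EuclideanSpace ℝ (Fin N))}ᶜ ∈ nhds x :=
        isOpen_compl_singleton.mem_nhds hx
      have hEq : (fun y => fderiv ℝ
          (fun z : EuclideanSpace ℝ (Fin N) => C * (1 + ((‖z‖ : ℝ) ^ 2) ^ p) ^ q) y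
          (EuclideanSpace.single i (1 : ℝ)))
          =ᶠ[nhds x] fun y : EuclideanSpace ℝ (Fin N) => g1 ((‖y‖ : ℝ) ^ 2) * (2 * y i) := by
        filter_upwards [hxmem] with y hy
        exact hfd1 y hy i
      rw [hEq.fderiv_eq]
      have hA1 := (hg1d ((‖x‖ : ℝ) ^ 2) htx).comp_hasFDerivAt x
        (hasStrictFDerivAt_norm_sq x).hasFDerivAt
      simp only [Function.comp_def] at hA1
      have hA2 : HasFDerivAt (fun y : EuclideanSpace ℝ (Fin N) => 2 * y i)
          ((2 : ℝ) • (EuclideanSpace.proj i : EuclideanSpace ℝ (Fin N) →L[ℝ] ℝ)) x :=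
        (EuclideanSpace.proj i :
          EuclideanSpace ℝ (Fin N) →L[ℝ] ℝ).hasFDerivAt.const_mul (2 : ℝ)
      have hprod := hA1.mul hA2
      rw [(show HasFDerivAt (fun y : EuclideanSpace ℝ (Fin N) => g1 ((‖y‖ : ℝ) ^ 2) * (2 * y i)) _ x
        from hprod).fderiv]
      rw [hG2_def]
      simp [EuclideanSpace.inner_single_right, EuclideanSpace.single_apply]
      try ring
    -- sum over the coordinates
    have hsum : ∑ i : Fin N, (x i : ℝ) ^ 2 = (‖x‖ : ℝ) ^ 2 := by
      rw [PiLp.norm_sq_eq_of_L2]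
      exact Finset.sum_congr rfl fun i _ => by rw [Real.norm_eq_abs, sq_abs]
    have hEL : eLaplacian N
        (fun y : EuclideanSpace ℝ (Fin N) => C * (1 + ((‖y‖ : ℝ) ^ 2) ^ p) ^ q) x
        = 2 * (N : ℝ) * g1 ((‖x‖ : ℝ) ^ 2) + 4 * G2 * ((‖x‖ : ℝ) ^ 2) := by
      have h0 : eLaplacian N
          (fun y : EuclideanSpace ℝ (Fin N) => C * (1 + ((‖y‖ : ℝ) ^ 2) ^ p) ^ q) x
          = ∑ i : Fin N, (2 * g1 ((‖x‖ : ℝ) ^ 2) + G2 * (2 * x i) * (2 * x i)) :=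
        Finset.sum_congr rfl fun i _ => hterm i
      rw [h0, Finset.sum_add_distrib, Finset.sum_const, Finset.card_univ, Fintype.card_fin]
      have h1 : ∑ i : Fin N, G2 * (2 * x i) * (2 * x i)
          = 4 * G2 * ∑ i : Fin N, (x i : ℝ) ^ 2 := by
        rw [Finset.mul_sum]
        exact Finset.sum_congr rfl fun i _ => by ring
      rw [h1, hsum, nsmul_eq_mul]
      ring
    -- now the algebra
    have hρ : ((‖x‖ : ℝ) ^ 2) ^ (p - 1) = ‖x‖ ^ (-σ) := by
      rw [← Real.rpow_natCast ‖x‖ 2, ← Real.rpow_mul (norm_nonneg x)]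
      congr 1
      push_cast
      rw [hp_def]; ring
    have hρ2 : ((‖x‖ : ℝ) ^ 2) ^ (p - 2) = ‖x‖ ^ (-σ) / ((‖x‖ : ℝ) ^ 2) := by
      rw [eq_div_iff htx.ne', ← Real.rpow_natCast ‖x‖ 2,
        ← Real.rpow_mul (norm_nonneg x), ← Real.rpow_add hr]
      congr 1
      push_cast
      rw [hp_def]; ring
    have hst : (‖x‖ : ℝ) ^ 2 * ‖x‖ ^ (-σ) = ‖x‖ ^ (2 - σ) := by
      rw [show (2 : ℝ) - σ = 2 + -σ by ring, Real.rpow_add hr, Real.rpow_two]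
    have hB : (0 : ℝ) < 1 + ‖x‖ ^ (2 - σ) := by positivity
    have hq1 : (1 + ‖x‖ ^ (2 - σ)) ^ (q - 1)
        = (1 + ‖x‖ ^ (2 - σ)) ^ (q - 2) * (1 + ‖x‖ ^ (2 - σ)) := by
      rw [show q - 1 = q - 2 + 1 by ring, Real.rpow_add_one hB.ne']
    have hCe : C ^ (2 * ((N : ℝ) - σ) / ((N : ℝ) - 2) - 1) = C * A := by
      rw [hC_def, ← Real.rpow_mul hA.le]
      rw [show (((N : ℝ) - 2) / (2 * (2 - σ))) * (2 * ((N : ℝ) - σ) / ((N : ℝ) - 2) - 1)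
          = ((N : ℝ) - 2) / (2 * (2 - σ)) + 1 by
        field_simp
        ring]
      rw [Real.rpow_add hA, Real.rpow_one]
    have hqe : q * (2 * ((N : ℝ) - σ) / ((N : ℝ) - 2) - 1) = q - 2 := by
      rw [hq_def]
      field_simp
      ring
    have hBe : ((1 + ‖x‖ ^ (2 - σ)) ^ q) ^ (2 * ((N : ℝ) - σ) / ((N : ℝ) - 2) - 1)
        = (1 + ‖x‖ ^ (2 - σ)) ^ (q - 2) := by
      rw [← Real.rpow_mul hB.le, hqe]
    show -eLaplacian N
        (fun y : EuclideanSpace ℝ (Fin N) => C * (1 + ((‖y‖ : ℝ) ^ 2) ^ p) ^ q) x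
        = ‖x‖ ^ (-σ) * (C * (1 + ((‖x‖ : ℝ) ^ 2) ^ p) ^ q)
          ^ (2 * ((N : ℝ) - σ) / ((N : ℝ) - 2) - 1)
    rw [hEL, hnorm2 x,
      Real.mul_rpow hC.le (Real.rpow_nonneg hB.le q), hCe, hBe,
      hg1_def, hG2_def]
    simp only []
    rw [hnorm2 x, hρ, hρ2, hq1, ← hst]
    rw [hp_def, hq_def, hA_def]
    field_simp
    ring
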